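/- arXiv:2301.11594 — 8 statements merged into one kernel-verified Lean document; each statement's English description precedes it below -/
import Mathlib

section
/- Let F₁, F₂ be N-functions with right-derivatives f₁, f₂ (so Fᵢ(x) = ∫₀^x fᵢ(t) dt with fᵢ non-decreasing, right-continuous, fᵢ(0)=0, fᵢ(t)>0 for t>0, fᵢ(t)→∞). Then there exist K > 0 and t₀ > 0 with F₁(t) ≤ F₂(K·t) for all t ≥ t₀ if and only if there exist k > 1 and t₁ > 0 with f₁(t) ≤ k·f₂(k·t) for all t ≥ t₁. -/
open MeasureTheory intervalIntegral

lemma mono_intble (f : ℝ → ℝ) (hm : MonotoneOn f (Set.Ici 0)) {a b : ℝ} (ha : 0 ≤ a)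
    (hab : a ≤ b) : IntervalIntegrable f volume a b := by
  apply MonotoneOn.intervalIntegrable
  apply hm.mono
  rw [Set.uIcc_of_le hab]
  exact fun x hx => le_trans ha hx.1

lemma int_ub (f : ℝ → ℝ) (hm : MonotoneOn f (Set.Ici 0)) {a b : ℝ} (ha : 0 ≤ a)
    (hab : a ≤ b) : (∫ t in a..b, f t) ≤ (b - a) * f b := by
  have h := intervalIntegral.integral_mono_on hab (mono_intble f hm ha hab)
    (_root_.intervalIntegrable_const (c := f b))
    (fun x hx => hm (le_trans ha hx.1) (le_trans ha hab) hx.2)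
  simpa using h

lemma int_lb (f : ℝ → ℝ) (hm : MonotoneOn f (Set.Ici 0)) {a b : ℝ} (ha : 0 ≤ a)
    (hab : a ≤ b) : (b - a) * f a ≤ ∫ t in a..b, f t := by
  have h := intervalIntegral.integral_mono_on hab (_root_.intervalIntegrable_const (c := f a))
    (mono_intble f hm ha hab)
    (fun x hx => hm ha (le_trans ha hx.1) hx.1)
  simpa using h

lemma int_split (f : ℝ → ℝ) (hm : MonotoneOn f (Set.Ici 0)) {a b : ℝ} (ha : 0 ≤ a)
    (hab : a ≤ b) :
    (∫ t in (0:ℝ)..b, f t) = (∫ t in (0:ℝ)..a, f t) + ∫ t in a..b, f t :=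
  (integral_add_adjacent_intervals (mono_intble f hm le_rfl ha) (mono_intble f hm ha hab)).symm

theorem stmt_3 (f₁ f₂ F₁ F₂ : ℝ → ℝ)
    (hnn₁ : ∀ t : ℝ, 0 ≤ t → 0 ≤ f₁ t) (hnn₂ : ∀ t : ℝ, 0 ≤ t → 0 ≤ f₂ t)
    (hmono₁ : MonotoneOn f₁ (Set.Ici (0:ℝ))) (hmono₂ : MonotoneOn f₂ (Set.Ici (0:ℝ)))
    (hrc₁ : ∀ x : ℝ, 0 ≤ x → ContinuousWithinAt f₁ (Set.Ici x) x)
    (hrc₂ : ∀ x : ℝ, 0 ≤ x → ContinuousWithinAt f₂ (Set.Ici x) x)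
    (h₁0 : f₁ 0 = 0) (h₂0 : f₂ 0 = 0)
    (hpos₁ : ∀ t : ℝ, 0 < t → 0 < f₁ t) (hpos₂ : ∀ t : ℝ, 0 < t → 0 < f₂ t)
    (htend₁ : Filter.Tendsto f₁ Filter.atTop Filter.atTop)
    (htend₂ : Filter.Tendsto f₂ Filter.atTop Filter.atTop)
    (hF₁ : ∀ x : ℝ, F₁ x = ∫ t in (0:ℝ)..|x|, f₁ t)
    (hF₂ : ∀ x : ℝ, F₂ x = ∫ t in (0:ℝ)..|x|, f₂ t) :
    (∃ K > (0:ℝ), ∃ t₀ > (0:ℝ), ∀ t ≥ t₀, F₁ t ≤ F₂ (K * t)) ↔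
      (∃ k > (1:ℝ), ∃ t₁ > (0:ℝ), ∀ t ≥ t₁, f₁ t ≤ k * f₂ (k * t)) := by
  constructor
  · rintro ⟨K, hK, t₀, ht₀, hF⟩
    refine ⟨2*K+2, by linarith, t₀, ht₀, fun t ht => ?_⟩
    have htpos : 0 < t := lt_of_lt_of_le ht₀ ht
    have hKt : (0:ℝ) ≤ 2*K*t := by positivity
    have h1 : t * f₁ t ≤ ∫ s in t..2*t, f₁ s := by
      have := int_lb f₁ hmono₁ (le_of_lt htpos) (by linarith : t ≤ 2*t)
      linarith [this, (by ring : (2*t - t) * f₁ t = t * f₁ t)]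
    have h2 : (∫ s in t..2*t, f₁ s) ≤ F₁ (2*t) := by
      rw [hF₁, abs_of_pos (by linarith : (0:ℝ) < 2*t),
        int_split f₁ hmono₁ (le_of_lt htpos) (by linarith : t ≤ 2*t)]
      have : (0:ℝ) ≤ ∫ s in (0:ℝ)..t, f₁ s :=
        intervalIntegral.integral_nonneg (le_of_lt htpos) (fun u hu => hnn₁ u hu.1)
      linarith
    have h3 : F₁ (2*t) ≤ F₂ (K*(2*t)) := hF (2*t) (by linarith)
    have h4 : F₂ (K*(2*t)) ≤ (2*K*t) * f₂ (2*K*t) := by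
      rw [hF₂, abs_of_nonneg (by positivity : (0:ℝ) ≤ K*(2*t))]
      have := int_ub f₂ hmono₂ le_rfl (by positivity : (0:ℝ) ≤ K*(2*t))
      calc (∫ s in (0:ℝ)..K*(2*t), f₂ s) ≤ (K*(2*t) - 0) * f₂ (K*(2*t)) := this
        _ = (2*K*t) * f₂ (2*K*t) := by ring_nf
    have h5 : f₂ (2*K*t) ≤ f₂ ((2*K+2)*t) :=
      hmono₂ hKt (Set.mem_Ici.mpr (by positivity)) (by nlinarith)
    have hf2nn : 0 ≤ f₂ ((2*K+2)*t) := hnn₂ _ (by positivity)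
    have : t * f₁ t ≤ t * ((2*K+2) * f₂ ((2*K+2)*t)) := by nlinarith
    exact le_of_mul_le_mul_left (by linarith) htpos
  · rintro ⟨k, hk, t₁, ht₁, hf⟩
    have hk0 : (0:ℝ) < k := by linarith
    have hc : 0 < f₂ (k*t₁) := hpos₂ _ (by positivity)
    refine ⟨3*k, by linarith, max t₁ (F₁ t₁ / (k * f₂ (k*t₁))),
      lt_of_lt_of_le ht₁ (le_max_left _ _), fun t ht => ?_⟩
    have htt₁ : t₁ ≤ t := le_trans (le_max_left _ _) ht
    have htpos : 0 < t := lt_of_lt_of_le ht₁ htt₁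
    have hdiv : F₁ t₁ / (k * f₂ (k*t₁)) ≤ t := le_trans (le_max_right _ _) ht
    have hB0 : F₁ t₁ ≤ t * (k * f₂ (k*t₁)) := by
      rw [div_le_iff₀ (by positivity)] at hdiv; linarith
    have hmon2 : f₂ (k*t₁) ≤ f₂ (k*t) := hmono₂ (Set.mem_Ici.mpr (by positivity))
      (Set.mem_Ici.mpr (by positivity)) (by nlinarith)
    have hf2nn : 0 ≤ f₂ (k*t) := hnn₂ _ (by positivity)
    -- F₁ t ≤ F₁ t₁ + (t - t₁) * (k * f₂ (k*t))
    have hA : F₁ t ≤ F₁ t₁ + (t - t₁) * (k * f₂ (k*t)) := by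
      rw [hF₁ t, abs_of_pos htpos, int_split f₁ hmono₁ (le_of_lt ht₁) htt₁, hF₁ t₁,
        abs_of_pos ht₁]
      have hcmp : (∫ s in t₁..t, f₁ s) ≤ (t - t₁) * (k * f₂ (k*t)) := by
        have h := intervalIntegral.integral_mono_on htt₁
          (mono_intble f₁ hmono₁ (le_of_lt ht₁) htt₁)
          (_root_.intervalIntegrable_const (c := k * f₂ (k*t)))
          (fun x hx => by
            have hx0 : (0:ℝ) ≤ x := le_trans ht₁.le hx.1
            have h1 : f₁ x ≤ k * f₂ (k*x) := hf x hx.1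
            have h2 : f₂ (k*x) ≤ f₂ (k*t) := hmono₂
              (Set.mem_Ici.mpr (by positivity)) (Set.mem_Ici.mpr (by positivity))
              (by nlinarith [hx.2])
            nlinarith)
        have : k * ((t - t₁) * f₂ (k * t)) = (t - t₁) * (k * f₂ (k * t)) := by ring
        linarith [this ▸ (by simpa using h : (∫ u in t₁..t, f₁ u) ≤ k * ((t - t₁) * f₂ (k * t)))]
      nlinarith [hcmp]
    have hF₁t : F₁ t ≤ 2 * (k * t) * f₂ (k*t) := by
      have hX : (0:ℝ) ≤ k * f₂ (k*t) := mul_nonneg hk0.le hf2nn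
      have h1 : (t - t₁) * (k * f₂ (k*t)) ≤ t * (k * f₂ (k*t)) :=
        mul_le_mul_of_nonneg_right (by linarith) hX
      have h2 : F₁ t₁ ≤ t * (k * f₂ (k*t)) := by
        have := mul_le_mul_of_nonneg_left (mul_le_mul_of_nonneg_left hmon2 hk0.le) htpos.le
        linarith
      nlinarith [hA]
    -- F₂ (3*k*t) ≥ 2*k*t * f₂ (k*t)
    have hD : 2 * (k * t) * f₂ (k*t) ≤ F₂ (3*k*t) := by
      rw [hF₂, abs_of_pos (by positivity : (0:ℝ) < 3*k*t),
        int_split f₂ hmono₂ (by positivity : (0:ℝ) ≤ k*t) (by nlinarith : k*t ≤ 3*k*t)]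
      have hnn : (0:ℝ) ≤ ∫ s in (0:ℝ)..k*t, f₂ s :=
        intervalIntegral.integral_nonneg (by positivity) (fun u hu => hnn₂ u hu.1)
      have hlb := int_lb f₂ hmono₂ (by positivity : (0:ℝ) ≤ k*t)
        (by nlinarith : k*t ≤ 3*k*t)
      nlinarith [hlb]
    calc F₁ t ≤ 2 * (k * t) * f₂ (k*t) := hF₁t
      _ ≤ F₂ (3*k*t) := hD
      _ = F₂ (3*k*t) := rfl
end

section
/- Let M, L ∈ 𝓛𝓒 with quotient sequences μ, λ and counting functions Σ_M, Σ_L. Then the following are equivalent: (a) there exist A ≥ 1, k > 0, t₀ > 0 such that Σ_M(t) ≤ A·Σ_L(t^k) for all t ≥ t₀; (b) there exist B ≥ 1, k > 0, j₀ ∈ ℕ such that λ_{⌈j/B⌉} ≤ μ_j^k for all j ≥ j₀. -/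
open Filter

/-- Auxiliary: the sublevel sets of a sequence tending to infinity are finite. -/
lemma stmt7_aux_fin (ν : ℕ → ℝ) (hten : Tendsto ν atTop atTop) (t : ℝ) :
    {j : ℕ | 1 ≤ j ∧ ν j ≤ t}.Finite := by
  obtain ⟨N, hN⟩ := (hten.eventually (eventually_gt_atTop t)).exists_forall_of_atTop
  apply (Set.finite_Iio N).subset
  intro j hj
  simp only [Set.mem_Iio]
  by_contra h
  push_neg at h
  exact absurd hj.2 (not_le.mpr (hN j h))

lemma stmt7_aux_lb (ν : ℕ → ℝ) (hmono : Monotone ν) (t : ℝ)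
    (hfin : {j : ℕ | 1 ≤ j ∧ ν j ≤ t}.Finite) (n : ℕ) (hn : 1 ≤ n) (h : ν n ≤ t) :
    n ≤ {j : ℕ | 1 ≤ j ∧ ν j ≤ t}.ncard := by
  have hsub : ↑(Finset.Icc 1 n) ⊆ {j : ℕ | 1 ≤ j ∧ ν j ≤ t} := by
    intro j hj
    simp only [Finset.coe_Icc, Set.mem_Icc] at hj
    exact ⟨hj.1, le_trans (hmono hj.2) h⟩
  calc n = (Finset.Icc 1 n).card := by simp [Nat.card_Icc]
    _ = (↑(Finset.Icc 1 n) : Set ℕ).ncard := (Set.ncard_coe_finset _).symm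
    _ ≤ _ := Set.ncard_le_ncard hsub hfin

lemma stmt7_aux_ub (ν : ℕ → ℝ) (hmono : Monotone ν) (t : ℝ) (m : ℕ) (hm : 1 ≤ m)
    (h : m ≤ {j : ℕ | 1 ≤ j ∧ ν j ≤ t}.ncard) : ν m ≤ t := by
  by_contra hc
  push_neg at hc
  have hsub : {j : ℕ | 1 ≤ j ∧ ν j ≤ t} ⊆ ↑(Finset.Ico 1 m) := by
    intro j hj
    simp only [Finset.coe_Ico, Set.mem_Ico]
    refine ⟨hj.1, ?_⟩
    by_contra hjm
    push_neg at hjm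
    exact absurd hj.2 (not_le.mpr (lt_of_lt_of_le hc (hmono hjm)))
  have hle := Set.ncard_le_ncard hsub (Finset.finite_toSet _)
  rw [Set.ncard_coe_finset, Nat.card_Ico] at hle
  omega

/-- Basic facts about the quotient sequence of a log-convex sequence. -/
lemma stmt7_quot (N : ℕ → ℝ) (ν : ℕ → ℝ) (hpos : ∀ j, 0 < N j) (h0 : N 0 = 1)
    (hnorm : N 0 ≤ N 1) (hlc : ∀ j : ℕ, (N (j+1))^2 ≤ N j * N (j+2))
    (hν0 : ν 0 = 1) (hν : ∀ j : ℕ, ν (j+1) = N (j+1) / N j)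
    (hgrow : Tendsto (fun j : ℕ => (N j) ^ (1/(j:ℝ))) atTop atTop) :
    Monotone ν ∧ (∀ j, 1 ≤ ν j) ∧ Tendsto ν atTop atTop := by
  have hmono : Monotone ν := by
    apply monotone_nat_of_le_succ
    intro j
    cases j with
    | zero =>
      rw [hν0, hν 0, h0, div_one]
      rw [h0] at hnorm; exact hnorm
    | succ i =>
      rw [hν i, hν (i+1), div_le_div_iff₀ (hpos i) (hpos (i+1))]
      nlinarith [hlc i]
  have hge1 : ∀ j, 1 ≤ ν j := fun j => by
    have := hmono (Nat.zero_le j); rwa [hν0] at this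
  have hNle : ∀ j, N j ≤ ν j ^ j := by
    intro j
    induction j with
    | zero => simp [h0]
    | succ i ih =>
      have hνpos : 0 < ν (i+1) := lt_of_lt_of_le one_pos (hge1 _)
      have hNi : N (i+1) = N i * ν (i+1) := by
        have h0' : N i ≠ 0 := (hpos i).ne'
        rw [hν i, mul_comm, div_mul_cancel₀ _ h0']
      rw [hNi, pow_succ]
      apply mul_le_mul _ le_rfl hνpos.le (pow_nonneg (le_of_lt (lt_of_lt_of_le one_pos (hge1 _))) _)
      exact le_trans ih (pow_le_pow_left₀ (le_of_lt (lt_of_lt_of_le one_pos (hge1 i)))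
        (hmono (Nat.le_succ i)) i)
  have hcomp : ∀ᶠ j : ℕ in atTop, (N j) ^ (1/(j:ℝ)) ≤ ν j := by
    filter_upwards [eventually_ge_atTop 1] with j hj
    have hjpos : (0:ℝ) < j := by exact_mod_cast hj
    have h1 : (N j) ^ (1/(j:ℝ)) ≤ (ν j ^ j) ^ (1/(j:ℝ)) :=
      Real.rpow_le_rpow (hpos j).le (hNle j) (by positivity)
    have h2 : (ν j ^ j : ℝ) ^ (1/(j:ℝ)) = ν j := by
      rw [← Real.rpow_natCast (ν j) j, ← Real.rpow_mul (le_trans zero_le_one (hge1 j))]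
      rw [mul_one_div, div_self hjpos.ne', Real.rpow_one]
    rwa [h2] at h1
  exact ⟨hmono, hge1, tendsto_atTop_mono' atTop hcomp hgrow⟩

theorem stmt_7 (M L : ℕ → ℝ) (μ lam : ℕ → ℝ) (SigM SigL : ℝ → ℕ)
    (hMpos : ∀ j, 0 < M j) (hM0 : M 0 = 1) (hMnorm : M 0 ≤ M 1)
    (hMlc : ∀ j : ℕ, (M (j+1))^2 ≤ M j * M (j+2))
    (hMgrow : Filter.Tendsto (fun j : ℕ => (M j) ^ (1/(j:ℝ))) Filter.atTop Filter.atTop)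
    (hLpos : ∀ j, 0 < L j) (hL0 : L 0 = 1) (hLnorm : L 0 ≤ L 1)
    (hLlc : ∀ j : ℕ, (L (j+1))^2 ≤ L j * L (j+2))
    (hLgrow : Filter.Tendsto (fun j : ℕ => (L j) ^ (1/(j:ℝ))) Filter.atTop Filter.atTop)
    (hμ0 : μ 0 = 1) (hμ : ∀ j : ℕ, μ (j+1) = M (j+1) / M j)
    (hlam0 : lam 0 = 1) (hlam : ∀ j : ℕ, lam (j+1) = L (j+1) / L j)
    (hSigM : ∀ t : ℝ, SigM t = Set.ncard {j : ℕ | 1 ≤ j ∧ μ j ≤ t})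
    (hSigL : ∀ t : ℝ, SigL t = Set.ncard {j : ℕ | 1 ≤ j ∧ lam j ≤ t}) :
    (∃ A : ℝ, 1 ≤ A ∧ ∃ k > (0:ℝ), ∃ t₀ > (0:ℝ), ∀ t ≥ t₀,
        (SigM t : ℝ) ≤ A * (SigL (t ^ k) : ℝ)) ↔
      (∃ B : ℝ, 1 ≤ B ∧ ∃ k > (0:ℝ), ∃ j₀ : ℕ, 1 ≤ j₀ ∧ ∀ j ≥ j₀,
        lam ⌈(j : ℝ) / B⌉₊ ≤ (μ j) ^ k) := by
  obtain ⟨hμmono, hμge1, hμten⟩ := stmt7_quot M μ hMpos hM0 hMnorm hMlc hμ0 hμ hMgrow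
  obtain ⟨hlmono, hlge1, hlten⟩ := stmt7_quot L lam hLpos hL0 hLnorm hLlc hlam0 hlam hLgrow
  constructor
  · rintro ⟨A, hA, k, hk, t₀, ht₀, hab⟩
    have hApos : (0:ℝ) < A := lt_of_lt_of_le one_pos hA
    obtain ⟨j₁, hj₁⟩ := (hμten.eventually (eventually_ge_atTop t₀)).exists_forall_of_atTop
    refine ⟨A, hA, k, hk, max j₁ 1, le_max_right _ _, fun j hj => ?_⟩
    have hj1 : 1 ≤ j := le_trans (le_max_right _ _) hj
    have hμjt : t₀ ≤ μ j := hj₁ j (le_trans (le_max_left _ _) hj)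
    have hineq := hab (μ j) hμjt
    have hSM : (j : ℝ) ≤ (SigM (μ j) : ℝ) := by
      rw [hSigM]
      exact_mod_cast stmt7_aux_lb μ hμmono (μ j) (stmt7_aux_fin μ hμten _) j hj1 le_rfl
    have hjA : (j : ℝ) / A ≤ (SigL ((μ j) ^ k) : ℝ) := by
      rw [div_le_iff₀ hApos]
      calc (j:ℝ) ≤ (SigM (μ j) : ℝ) := hSM
        _ ≤ A * (SigL ((μ j) ^ k) : ℝ) := hineq
        _ = (SigL ((μ j) ^ k) : ℝ) * A := mul_comm _ _
    have hceil : ⌈(j : ℝ) / A⌉₊ ≤ SigL ((μ j) ^ k) := by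
      rw [Nat.ceil_le]; exact hjA
    have hm1 : 1 ≤ ⌈(j : ℝ) / A⌉₊ := by
      rw [Nat.one_le_ceil_iff]
      positivity
    apply stmt7_aux_ub lam hlmono ((μ j) ^ k) _ hm1
    rw [hSigL] at hceil
    exact hceil
  · rintro ⟨B, hB, k, hk, j₀, hj₀, hb⟩
    have hBpos : (0:ℝ) < B := lt_of_lt_of_le one_pos hB
    refine ⟨B, hB, k, hk, μ j₀, lt_of_lt_of_le one_pos (hμge1 j₀), fun t ht => ?_⟩
    set n := SigM t with hn
    have hnj₀ : j₀ ≤ n := by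
      rw [hn, hSigM]
      exact stmt7_aux_lb μ hμmono t (stmt7_aux_fin μ hμten _) j₀ hj₀ ht
    have hn1 : 1 ≤ n := le_trans hj₀ hnj₀
    have hμn : μ n ≤ t := by
      apply stmt7_aux_ub μ hμmono t n hn1
      rw [hn, hSigM]
    have hlamn : lam ⌈(n : ℝ) / B⌉₊ ≤ t ^ k := by
      refine le_trans (hb n hnj₀) ?_
      exact Real.rpow_le_rpow (le_trans zero_le_one (hμge1 n)) hμn hk.le
    have hm1 : 1 ≤ ⌈(n : ℝ) / B⌉₊ := by
      rw [Nat.one_le_ceil_iff]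
      have : (0:ℝ) < n := by exact_mod_cast hn1
      positivity
    have hSL : ⌈(n : ℝ) / B⌉₊ ≤ SigL (t ^ k) := by
      rw [hSigL]
      exact stmt7_aux_lb lam hlmono (t ^ k) (stmt7_aux_fin lam hlten _) _ hm1 hlamn
    have : (n : ℝ) / B ≤ (SigL (t ^ k) : ℝ) :=
      le_trans (Nat.le_ceil _) (by exact_mod_cast hSL)
    rw [div_le_iff₀ hBpos] at this
    calc (SigM t : ℝ) = (n : ℝ) := by rw [hn]
      _ ≤ (SigL (t ^ k) : ℝ) * B := this
      _ = B * (SigL (t ^ k) : ℝ) := mul_comm _ _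
end

section
/- Let M, L ∈ 𝓛𝓒. Then ω_L(e^t) ≤ K·ω_M(e^t) + D for some K, D ≥ 1 and all t ≥ 0 (i.e. φ_{ω_M} ⪯ φ_{ω_L}) if and only if there exist A ≥ 1 and c ∈ ℕ_{>0} such that M_j ≤ A·(L_{cj})^{1/c} for all j ∈ ℕ. -/
open Real Filter

private lemma aux_ratio_mono (P : ℕ → ℝ) (hpos : ∀ j, 0 < P j)
    (hlc : ∀ j : ℕ, (P (j+1))^2 ≤ P j * P (j+2)) :
    Monotone fun j => P (j+1) / P j := by
  apply monotone_nat_of_le_succ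
  intro j
  rw [div_le_div_iff₀ (hpos j) (hpos (j+1))]
  nlinarith [hlc j]

private lemma aux_ratio_one (P : ℕ → ℝ) (hpos : ∀ j, 0 < P j) (h0 : P 0 = 1)
    (h01 : P 0 ≤ P 1) (hlc : ∀ j : ℕ, (P (j+1))^2 ≤ P j * P (j+2)) :
    ∀ j, 1 ≤ P (j+1) / P j := by
  intro j
  have h := aux_ratio_mono P hpos hlc (Nat.zero_le j)
  simp only at h
  have h1 : (1:ℝ) ≤ P 1 / P 0 := by
    rw [h0, div_one]; linarith
  exact h1.trans h

private lemma aux_mono (P : ℕ → ℝ) (hpos : ∀ j, 0 < P j) (h0 : P 0 = 1)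
    (h01 : P 0 ≤ P 1) (hlc : ∀ j : ℕ, (P (j+1))^2 ≤ P j * P (j+2)) :
    Monotone P := by
  apply monotone_nat_of_le_succ
  intro j
  have h := aux_ratio_one P hpos h0 h01 hlc j
  rw [le_div_iff₀ (hpos j)] at h
  linarith

private lemma aux_key_up (P : ℕ → ℝ) (hpos : ∀ j, 0 < P j)
    (hlc : ∀ j : ℕ, (P (j+1))^2 ≤ P j * P (j+2)) :
    ∀ j d, (P (j+1)/P j)^d * P j ≤ P (j+d) := by
  intro j d
  induction d with
  | zero => simp
  | succ d ih =>
    have hr := aux_ratio_mono P hpos hlc (show j ≤ j + d by omega)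
    simp only at hr
    have ht0 : 0 < P (j+1)/P j := div_pos (hpos _) (hpos _)
    calc (P (j+1)/P j)^(d+1) * P j = (P (j+1)/P j) * ((P (j+1)/P j)^d * P j) := by ring
    _ ≤ (P (j+1)/P j) * P (j+d) := mul_le_mul_of_nonneg_left ih ht0.le
    _ ≤ (P (j+d+1)/P (j+d)) * P (j+d) := mul_le_mul_of_nonneg_right hr (hpos _).le
    _ = P (j+d+1) := div_mul_cancel₀ _ (hpos _).ne'

private lemma aux_key_down (P : ℕ → ℝ) (hpos : ∀ j, 0 < P j)
    (hlc : ∀ j : ℕ, (P (j+1))^2 ≤ P j * P (j+2)) :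
    ∀ (m d k : ℕ), k + d ≤ m → P (k+d) ≤ (P (m+1)/P m)^d * P k := by
  intro m d
  induction d with
  | zero => intro k _; simp
  | succ d ih =>
    intro k hkd
    have hr := aux_ratio_mono P hpos hlc (show k + d ≤ m by omega)
    simp only at hr
    have ht0 : 0 < P (m+1)/P m := div_pos (hpos _) (hpos _)
    calc P (k+(d+1)) = (P (k+d+1)/P (k+d)) * P (k+d) := (div_mul_cancel₀ _ (hpos _).ne').symm
    _ ≤ (P (m+1)/P m) * P (k+d) := mul_le_mul_of_nonneg_right hr (hpos _).le
    _ ≤ (P (m+1)/P m) * ((P (m+1)/P m)^d * P k) :=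
        mul_le_mul_of_nonneg_left (ih k (by omega)) ht0.le
    _ = (P (m+1)/P m)^(d+1) * P k := by ring

private lemma aux_key (P : ℕ → ℝ) (hpos : ∀ j, 0 < P j)
    (hlc : ∀ j : ℕ, (P (j+1))^2 ≤ P j * P (j+2)) :
    ∀ j k, (P (j+1)/P j)^k * P j ≤ (P (j+1)/P j)^j * P k := by
  intro j k
  have ht0 : 0 < P (j+1)/P j := div_pos (hpos _) (hpos _)
  rcases le_total j k with h | h
  · obtain ⟨d, rfl⟩ := Nat.exists_eq_add_of_le h
    have h1 := aux_key_up P hpos hlc j d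
    calc (P (j+1)/P j)^(j+d) * P j = (P (j+1)/P j)^j * ((P (j+1)/P j)^d * P j) := by ring
    _ ≤ (P (j+1)/P j)^j * P (j+d) :=
        mul_le_mul_of_nonneg_left h1 (pow_nonneg ht0.le _)
  · obtain ⟨d, rfl⟩ := Nat.exists_eq_add_of_le h
    have h1 := aux_key_down P hpos hlc (k+d) d k (le_refl _)
    calc (P (k+d+1)/P (k+d))^k * P (k+d)
        ≤ (P (k+d+1)/P (k+d))^k * ((P (k+d+1)/P (k+d))^d * P k) :=
        mul_le_mul_of_nonneg_left h1 (pow_nonneg ht0.le _)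
    _ = (P (k+d+1)/P (k+d))^(k+d) * P k := by ring

private lemma aux_bdd (P : ℕ → ℝ) (hpos : ∀ j, 0 < P j) (h0 : P 0 = 1)
    (hgrow : Filter.Tendsto (fun j : ℕ => (P j) ^ (1/(j:ℝ))) Filter.atTop Filter.atTop)
    (s : ℝ) (hs : 0 < s) :
    BddAbove (Set.range fun k : ℕ => Real.log (s^k / P k)) := by
  obtain ⟨N, hN⟩ := Filter.eventually_atTop.mp (hgrow.eventually_ge_atTop s)
  have hne : (Finset.range (N+2)).Nonempty := ⟨0, Finset.mem_range.mpr (by omega)⟩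
  refine ⟨(Finset.range (N+2)).sup' hne (fun k => Real.log (s^k / P k)), ?_⟩
  rintro x ⟨k, rfl⟩
  by_cases hk : k < N + 2
  · exact Finset.le_sup' (fun k => Real.log (s^k / P k)) (Finset.mem_range.mpr hk)
  · push_neg at hk
    have hk1 : k ≠ 0 := by omega
    have hkN : N ≤ k := by omega
    have h1 : s ^ k ≤ P k := by
      have h2 := hN k hkN
      have h3 : s ^ k ≤ (P k ^ (1/(k:ℝ)))^k := pow_le_pow_left₀ hs.le h2 k
      have h4 : ((P k) ^ (1/(k:ℝ)))^k = P k := by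
        rw [← Real.rpow_natCast (P k ^ (1/(k:ℝ))) k, ← Real.rpow_mul (hpos k).le,
          one_div, inv_mul_cancel₀ (Nat.cast_ne_zero.mpr hk1), Real.rpow_one]
      rwa [h4] at h3
    have h5 : Real.log (s^k / P k) ≤ Real.log (s^0 / P 0) := by
      rw [pow_zero, h0, div_one, Real.log_one]
      exact Real.log_nonpos (div_nonneg (pow_nonneg hs.le k) (hpos k).le)
        ((div_le_one (hpos k)).mpr h1)
    exact h5.trans (Finset.le_sup' (fun k => Real.log (s^k / P k))
      (Finset.mem_range.mpr (by omega : 0 < N+2)))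

theorem stmt_8 (M L : ℕ → ℝ) (ωM ωL : ℝ → ℝ)
    (hMpos : ∀ j, 0 < M j) (hM0 : M 0 = 1) (hMnorm : M 0 ≤ M 1)
    (hMlc : ∀ j : ℕ, (M (j+1))^2 ≤ M j * M (j+2))
    (hMgrow : Filter.Tendsto (fun j : ℕ => (M j) ^ (1/(j:ℝ))) Filter.atTop Filter.atTop)
    (hLpos : ∀ j, 0 < L j) (hL0 : L 0 = 1) (hLnorm : L 0 ≤ L 1)
    (hLlc : ∀ j : ℕ, (L (j+1))^2 ≤ L j * L (j+2))
    (hLgrow : Filter.Tendsto (fun j : ℕ => (L j) ^ (1/(j:ℝ))) Filter.atTop Filter.atTop)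
    (hωM : ∀ t : ℝ, 0 < t → ωM t = ⨆ j : ℕ, Real.log (t^j / M j)) (hωM0 : ωM 0 = 0)
    (hωL : ∀ t : ℝ, 0 < t → ωL t = ⨆ j : ℕ, Real.log (t^j / L j)) (hωL0 : ωL 0 = 0) :
    (∃ K D : ℝ, 1 ≤ K ∧ 1 ≤ D ∧ ∀ t ≥ (0:ℝ), ωL (Real.exp t) ≤ K * ωM (Real.exp t) + D) ↔
      (∃ A : ℝ, 1 ≤ A ∧ ∃ c : ℕ, 0 < c ∧ ∀ j : ℕ, M j ≤ A * (L (c*j)) ^ (1/(c:ℝ))) := by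
  constructor
  · rintro ⟨K, D, hK, hD, h⟩
    have hK0 : (0:ℝ) < K := by linarith
    refine ⟨Real.exp (D/K), Real.one_le_exp (by positivity), ⌈K⌉₊,
      Nat.ceil_pos.mpr hK0, ?_⟩
    set c := ⌈K⌉₊ with hcdef
    have hcK : K ≤ (c:ℝ) := Nat.le_ceil K
    have hc1 : (1:ℝ) ≤ (c:ℝ) := le_trans hK hcK
    have hc0 : (0:ℝ) < (c:ℝ) := by linarith
    intro j
    set t := M (j+1) / M j with htdef
    have ht1 : 1 ≤ t := aux_ratio_one M hMpos hM0 hMnorm hMlc j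
    have ht0 : 0 < t := by linarith
    have hlt : 0 ≤ Real.log t := Real.log_nonneg ht1
    have hyp := h (Real.log t) hlt
    rw [Real.exp_log ht0] at hyp
    have hMle : ωM t ≤ (j:ℝ) * Real.log t - Real.log (M j) := by
      rw [hωM t ht0]
      apply ciSup_le
      intro k
      have hkey := aux_key M hMpos hMlc j k
      have h1 : t^k / M k ≤ t^j / M j := by
        rw [div_le_div_iff₀ (hMpos k) (hMpos j)]; exact hkey
      calc Real.log (t^k / M k) ≤ Real.log (t^j / M j) :=
            Real.log_le_log (div_pos (pow_pos ht0 k) (hMpos k)) h1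
      _ = (j:ℝ)*Real.log t - Real.log (M j) := by
            rw [Real.log_div (pow_ne_zero j ht0.ne') (hMpos j).ne', Real.log_pow]
    have hbddL := aux_bdd L hLpos hL0 hLgrow t ht0
    have hL0' : 0 ≤ ωL t := by
      rw [hωL t ht0]
      have h2 := le_ciSup hbddL 0
      simpa [hL0] using h2
    have hLge : ((c*j : ℕ):ℝ) * Real.log t - Real.log (L (c*j)) ≤ ωL t := by
      rw [hωL t ht0]
      have h2 := le_ciSup hbddL (c*j)
      rwa [Real.log_div (pow_ne_zero _ ht0.ne') (hLpos _).ne', Real.log_pow] at h2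
    have hyp2 : ωL t ≤ K * ((j:ℝ)*Real.log t - Real.log (M j)) + D := by
      have h3 := mul_le_mul_of_nonneg_left hMle hK0.le
      linarith
    have hdiv : (1:ℝ) ≤ (c:ℝ)/K := (one_le_div hK0).mpr hcK
    have h3 : ωL t ≤ ((c:ℝ)/K) * ωL t := le_mul_of_one_le_left hL0' hdiv
    have h4 : ((c:ℝ)/K) * ωL t ≤
        (c:ℝ)*((j:ℝ)*Real.log t - Real.log (M j)) + (c:ℝ)*D/K := by
      have h5 := mul_le_mul_of_nonneg_left hyp2 (by positivity : (0:ℝ) ≤ (c:ℝ)/K)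
      have heq : ((c:ℝ)/K) * (K * ((j:ℝ)*Real.log t - Real.log (M j)) + D)
          = (c:ℝ)*((j:ℝ)*Real.log t - Real.log (M j)) + (c:ℝ)*D/K := by
        field_simp
      rw [heq] at h5
      exact h5
    have hcast : ((c*j : ℕ):ℝ) = (c:ℝ)*(j:ℝ) := by push_cast; ring
    rw [hcast] at hLge
    have hfinal : (c:ℝ) * Real.log (M j) ≤ Real.log (L (c*j)) + (c:ℝ)*D/K := by
      nlinarith [hLge, h3, h4]
    have hrpos : (0:ℝ) < Real.exp (D/K) * (L (c*j)) ^ (1/(c:ℝ)) :=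
      mul_pos (Real.exp_pos _) (Real.rpow_pos_of_pos (hLpos _) _)
    have hrhs : Real.log (Real.exp (D/K) * (L (c*j)) ^ (1/(c:ℝ)))
        = D/K + (1/(c:ℝ)) * Real.log (L (c*j)) := by
      rw [Real.log_mul (Real.exp_ne_zero _) (Real.rpow_pos_of_pos (hLpos _) _).ne',
        Real.log_exp, Real.log_rpow (hLpos _)]
    have hlog : Real.log (M j) ≤ D/K + (1/(c:ℝ))*Real.log (L (c*j)) := by
      have h6 : (c:ℝ)*(D/K + (1/(c:ℝ))*Real.log (L (c*j)))
          = Real.log (L (c*j)) + (c:ℝ)*D/K := by field_simp; ring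
      have h7 : (c:ℝ) * Real.log (M j)
          ≤ (c:ℝ)*(D/K + (1/(c:ℝ))*Real.log (L (c*j))) := by rw [h6]; exact hfinal
      exact le_of_mul_le_mul_left h7 hc0
    calc M j = Real.exp (Real.log (M j)) := (Real.exp_log (hMpos j)).symm
    _ ≤ Real.exp (Real.log (Real.exp (D/K) * (L (c*j)) ^ (1/(c:ℝ)))) := by
        apply Real.exp_le_exp.mpr; rw [hrhs]; exact hlog
    _ = Real.exp (D/K) * (L (c*j)) ^ (1/(c:ℝ)) := Real.exp_log hrpos
  · rintro ⟨A, hA, c, hc, hMA⟩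
    have hc1 : (1:ℝ) ≤ (c:ℝ) := by exact_mod_cast hc
    have hA0 : (0:ℝ) < A := by linarith
    have hlogA : 0 ≤ Real.log A := Real.log_nonneg hA
    have hM1 : 0 ≤ Real.log (M 1) := Real.log_nonneg (by linarith)
    refine ⟨2*(c:ℝ), (c:ℝ)*Real.log A + ((c:ℝ)-1)*Real.log (M 1) + 1, by linarith, ?_, ?_⟩
    · nlinarith [mul_nonneg (by linarith : (0:ℝ) ≤ (c:ℝ)) hlogA,
        mul_nonneg (by linarith : (0:ℝ) ≤ (c:ℝ)-1) hM1]
    intro t ht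
    set s := Real.exp t with hsdef
    have hs0 : 0 < s := Real.exp_pos t
    have hs1 : 1 ≤ s := Real.one_le_exp ht
    have hlogs : 0 ≤ Real.log s := Real.log_nonneg hs1
    rw [hωL s hs0, hωM s hs0]
    set W := ⨆ i : ℕ, Real.log (s^i / M i) with hW
    have hbdd := aux_bdd M hMpos hM0 hMgrow s hs0
    have hWle : ∀ i : ℕ, (i:ℝ)*Real.log s - Real.log (M i) ≤ W := by
      intro i
      have h2 := le_ciSup hbdd i
      rwa [Real.log_div (pow_ne_zero _ hs0.ne') (hMpos i).ne', Real.log_pow] at h2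
    have a3 : 0 ≤ W := by have h2 := hWle 0; simpa [hM0] using h2
    apply ciSup_le
    intro k
    rw [Real.log_div (pow_ne_zero _ hs0.ne') (hLpos k).ne', Real.log_pow]
    obtain ⟨j, hcj, hk2⟩ : ∃ j, c * j ≤ k ∧ k < c*j + c := by
      refine ⟨k / c, Nat.mul_div_le k c, ?_⟩
      have h1 := Nat.div_add_mod k c
      have h2 := Nat.mod_lt k hc
      omega
    have hkR : (k:ℝ) ≤ (c:ℝ)*(j:ℝ) + (c:ℝ) - 1 := by
      have h1 : ((k:ℕ):ℝ) + 1 ≤ ((c*j + c : ℕ):ℝ) := by exact_mod_cast hk2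
      push_cast at h1
      linarith
    have d : (k:ℝ)*Real.log s ≤ ((c:ℝ)*(j:ℝ) + (c:ℝ) - 1)*Real.log s :=
      mul_le_mul_of_nonneg_right hkR hlogs
    have b : (c:ℝ)*Real.log (M j) ≤ (c:ℝ)*Real.log A + Real.log (L k) := by
      have h1 := hMA j
      have h2 : Real.log (M j) ≤ Real.log A + (1/(c:ℝ))*Real.log (L (c*j)) := by
        have h2' := Real.log_le_log (hMpos j) h1
        rwa [Real.log_mul hA0.ne' (Real.rpow_pos_of_pos (hLpos _) _).ne',
          Real.log_rpow (hLpos _)] at h2'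
      have h3 : Real.log (L (c*j)) ≤ Real.log (L k) :=
        Real.log_le_log (hLpos _) (aux_mono L hLpos hL0 hLnorm hLlc hcj)
      have h4 : (c:ℝ)*Real.log (M j)
          ≤ (c:ℝ)*(Real.log A + (1/(c:ℝ))*Real.log (L (c*j))) :=
        mul_le_mul_of_nonneg_left h2 (by linarith)
      have h5 : (c:ℝ)*(Real.log A + (1/(c:ℝ))*Real.log (L (c*j)))
          = (c:ℝ)*Real.log A + Real.log (L (c*j)) := by field_simp
      linarith
    have A1 : (c:ℝ)*((j:ℝ)*Real.log s - Real.log (M j)) ≤ (c:ℝ)*W :=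
      mul_le_mul_of_nonneg_left (hWle j) (by linarith)
    have A2 : ((c:ℝ)-1)*(Real.log s - Real.log (M 1)) ≤ ((c:ℝ)-1)*W := by
      have h2 := hWle 1
      push_cast at h2
      exact mul_le_mul_of_nonneg_left (by linarith) (by linarith)
    linarith [A1, A2, a3, b, d]
end

section
/- Let M, L ∈ 𝓛𝓒 with counting functions Σ_M, Σ_L and suppose Σ_M(t)/Σ_L(t) → b ∈ (0,∞) as t → ∞. Suppose moreover the quotient sequence μ of M satisfies μ_j < μ_{j+1} for all j ≥ 1. Then for all 0 < c₁ < b < c₂ there is j₀ such that for all j ≥ j₀, λ_{⌈j/c₂⌉ − 1} ≤ μ_j < λ_{⌈j/c₁⌉}. -/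
open Filter

theorem stmt_12 (M L : ℕ → ℝ) (μ lam : ℕ → ℝ) (SigM SigL : ℝ → ℕ) (b : ℝ) (hb : 0 < b)
    (hMpos : ∀ j, 0 < M j) (hM0 : M 0 = 1) (hMnorm : M 0 ≤ M 1)
    (hMlc : ∀ j : ℕ, (M (j+1))^2 ≤ M j * M (j+2))
    (hMgrow : Filter.Tendsto (fun j : ℕ => (M j) ^ (1/(j:ℝ))) Filter.atTop Filter.atTop)
    (hLpos : ∀ j, 0 < L j) (hL0 : L 0 = 1) (hLnorm : L 0 ≤ L 1)
    (hLlc : ∀ j : ℕ, (L (j+1))^2 ≤ L j * L (j+2))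
    (hLgrow : Filter.Tendsto (fun j : ℕ => (L j) ^ (1/(j:ℝ))) Filter.atTop Filter.atTop)
    (hμ0 : μ 0 = 1) (hμ : ∀ j : ℕ, μ (j+1) = M (j+1) / M j)
    (hlam0 : lam 0 = 1) (hlam : ∀ j : ℕ, lam (j+1) = L (j+1) / L j)
    (hμstrict : ∀ j : ℕ, 1 ≤ j → μ j < μ (j+1))
    (hSigM : ∀ t : ℝ, SigM t = Set.ncard {j : ℕ | 1 ≤ j ∧ μ j ≤ t})
    (hSigL : ∀ t : ℝ, SigL t = Set.ncard {j : ℕ | 1 ≤ j ∧ lam j ≤ t})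
    (hlim : Filter.Tendsto (fun t : ℝ => (SigM t : ℝ) / (SigL t : ℝ))
      Filter.atTop (nhds b)) :
    ∀ c₁ c₂ : ℝ, 0 < c₁ → c₁ < b → b < c₂ →
      ∃ j₀ : ℕ, 1 ≤ j₀ ∧ ∀ j ≥ j₀,
        lam (⌈(j : ℝ) / c₂⌉₊ - 1) ≤ μ j ∧ μ j < lam ⌈(j : ℝ) / c₁⌉₊ := by
  -- positivity of quotients
  have hμpos : ∀ j, 0 < μ j := by
    intro j
    cases j with
    | zero => rw [hμ0]; norm_num
    | succ n => rw [hμ]; exact div_pos (hMpos _) (hMpos _)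
  have hlampos : ∀ j, 0 < lam j := by
    intro j
    cases j with
    | zero => rw [hlam0]; norm_num
    | succ n => rw [hlam]; exact div_pos (hLpos _) (hLpos _)
  -- lam is monotone
  have hlammono : Monotone lam := by
    apply monotone_nat_of_le_succ
    intro n
    cases n with
    | zero =>
      rw [hlam0, hlam, hL0, div_one]
      linarith [hLnorm, hL0]
    | succ m =>
      rw [hlam, hlam]
      rw [div_le_div_iff₀ (hLpos _) (hLpos _)]
      have := hLlc m
      nlinarith
  -- μ is monotone
  have hμmono : Monotone μ := by
    apply monotone_nat_of_le_succ
    intro n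
    cases n with
    | zero =>
      rw [hμ0, hμ, hM0, div_one]
      linarith [hMnorm, hM0]
    | succ m => exact le_of_lt (hμstrict (m+1) (by omega))
  have hμsmono : ∀ k j : ℕ, 1 ≤ k → k < j → μ k < μ j := by
    intro k j hk hkj
    have h1 : μ k < μ (k+1) := hμstrict k hk
    have h2 : μ (k+1) ≤ μ j := hμmono (by omega)
    linarith
  -- M j ≤ μ j ^ j and L j ≤ lam j ^ j
  have hMle : ∀ j : ℕ, M j ≤ μ j ^ j := by
    intro j
    induction j with
    | zero => simp [hM0]
    | succ m ih =>
      have h1 : M (m+1) = μ (m+1) * M m := by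
        rw [hμ, div_mul_cancel₀ _ (hMpos m).ne']
      have h2 : μ m ^ m ≤ μ (m+1) ^ m :=
        pow_le_pow_left₀ (le_of_lt (hμpos m)) (hμmono (Nat.le_succ m)) m
      calc M (m+1) = μ (m+1) * M m := h1
        _ ≤ μ (m+1) * μ m ^ m := by nlinarith [hμpos (m+1)]
        _ ≤ μ (m+1) * μ (m+1) ^ m := by nlinarith [hμpos (m+1)]
        _ = μ (m+1) ^ (m+1) := by ring
  have hLle : ∀ j : ℕ, L j ≤ lam j ^ j := by
    intro j
    induction j with
    | zero => simp [hL0]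
    | succ m ih =>
      have h1 : L (m+1) = lam (m+1) * L m := by
        rw [hlam, div_mul_cancel₀ _ (hLpos m).ne']
      have h2 : lam m ^ m ≤ lam (m+1) ^ m :=
        pow_le_pow_left₀ (le_of_lt (hlampos m)) (hlammono (Nat.le_succ m)) m
      calc L (m+1) = lam (m+1) * L m := h1
        _ ≤ lam (m+1) * lam m ^ m := by nlinarith [hlampos (m+1)]
        _ ≤ lam (m+1) * lam (m+1) ^ m := by nlinarith [hlampos (m+1)]
        _ = lam (m+1) ^ (m+1) := by ring
  -- root bounds
  have hroot : ∀ (f g : ℕ → ℝ), (∀ j, 0 < f j) → (∀ j, 0 < g j) →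
      (∀ j, f j ≤ g j ^ j) → ∀ j : ℕ, 1 ≤ j → f j ^ (1/(j:ℝ)) ≤ g j := by
    intro f g hf hg hfg j hj
    have hj' : (0:ℝ) < (j:ℝ) := by exact_mod_cast hj
    have h := Real.rpow_le_rpow (le_of_lt (hf j)) (hfg j)
      (by positivity : (0:ℝ) ≤ 1/(j:ℝ))
    calc f j ^ (1/(j:ℝ)) ≤ (g j ^ j) ^ (1/(j:ℝ)) := h
      _ = g j := by
        rw [← Real.rpow_natCast (g j) j, ← Real.rpow_mul (le_of_lt (hg j)),
          mul_one_div, div_self hj'.ne', Real.rpow_one]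
  have hμtop : Tendsto μ atTop atTop := by
    apply tendsto_atTop_mono' atTop _ hMgrow
    filter_upwards [eventually_ge_atTop 1] with j hj
    exact hroot M μ hMpos hμpos hMle j hj
  have hlamtop : Tendsto lam atTop atTop := by
    apply tendsto_atTop_mono' atTop _ hLgrow
    filter_upwards [eventually_ge_atTop 1] with j hj
    exact hroot L lam hLpos hlampos hLle j hj
  -- counting identity for M
  have hSigMμ : ∀ j : ℕ, 1 ≤ j → SigM (μ j) = j := by
    intro j hj
    rw [hSigM]
    have hset : {k : ℕ | 1 ≤ k ∧ μ k ≤ μ j} = Set.Icc 1 j := by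
      ext k
      simp only [Set.mem_setOf_eq, Set.mem_Icc]
      constructor
      · rintro ⟨hk, hle⟩
        refine ⟨hk, ?_⟩
        by_contra h
        push_neg at h
        exact absurd hle (not_le.mpr (hμsmono j k hj h))
      · rintro ⟨hk, hkj⟩
        exact ⟨hk, hμmono hkj⟩
    rw [hset, ← Finset.coe_Icc, Set.ncard_coe_finset, Nat.card_Icc]; omega
  -- finiteness of SigL sets
  have hSfin : ∀ t : ℝ, {k : ℕ | 1 ≤ k ∧ lam k ≤ t}.Finite := by
    intro t
    obtain ⟨K, hK⟩ := eventually_atTop.mp (hlamtop.eventually_gt_atTop t)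
    apply (Set.finite_Iio K).subset
    intro m hm
    simp only [Set.mem_Iio]
    by_contra h
    push_neg at h
    exact absurd hm.2 (not_le.mpr (hK m h))
  have hIcc_card : ∀ a : ℕ, (Set.Icc 1 a).ncard = a := by
    intro a
    rw [← Finset.coe_Icc, Set.ncard_coe_finset, Nat.card_Icc]; omega
  -- lam k ≤ t → k ≤ SigL t
  have hle_SigL : ∀ (t : ℝ) (k : ℕ), 1 ≤ k → lam k ≤ t → k ≤ SigL t := by
    intro t k hk hkt
    rw [hSigL]
    have hsub : Set.Icc 1 k ⊆ {m : ℕ | 1 ≤ m ∧ lam m ≤ t} := by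
      intro m hm
      exact ⟨hm.1, le_trans (hlammono hm.2) hkt⟩
    calc k = (Set.Icc 1 k).ncard := (hIcc_card k).symm
      _ ≤ _ := Set.ncard_le_ncard hsub (hSfin t)
  -- k ≤ SigL t → lam k ≤ t
  have hSigL_le : ∀ (t : ℝ) (k : ℕ), 1 ≤ k → k ≤ SigL t → lam k ≤ t := by
    intro t k hk hks
    by_contra h
    push_neg at h
    have hsub : {m : ℕ | 1 ≤ m ∧ lam m ≤ t} ⊆ Set.Icc 1 (k-1) := by
      intro m hm
      refine ⟨hm.1, ?_⟩
      by_contra hmk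
      push_neg at hmk
      have : lam k ≤ lam m := hlammono (by omega)
      linarith [hm.2]
    have hcard : SigL t ≤ k - 1 := by
      rw [hSigL]
      calc _ ≤ (Set.Icc 1 (k-1)).ncard := Set.ncard_le_ncard hsub (Set.finite_Icc _ _)
        _ = k - 1 := hIcc_card _
    omega
  -- the ratio limit along μ j
  have hratio : Tendsto (fun j : ℕ => (j : ℝ) / (SigL (μ j) : ℝ)) atTop (nhds b) := by
    apply (hlim.comp hμtop).congr'
    filter_upwards [eventually_ge_atTop 1] with j hj
    simp only [Function.comp_apply, hSigMμ j hj]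
  -- main argument
  intro c₁ c₂ hc₁ hc₁b hbc₂
  have hc₂ : 0 < c₂ := hb.trans hbc₂
  have h1 : ∀ᶠ j : ℕ in atTop, c₁ < (j:ℝ)/(SigL (μ j) : ℝ) :=
    hratio.eventually_const_lt hc₁b
  have h2 : ∀ᶠ j : ℕ in atTop, (j:ℝ)/(SigL (μ j) : ℝ) < c₂ :=
    hratio.eventually_lt_const hbc₂
  have h3 : ∀ᶠ j : ℕ in atTop, 1 ≤ μ j := hμtop.eventually_ge_atTop 1
  obtain ⟨j₀, hj₀⟩ := eventually_atTop.mp (h1.and (h2.and h3))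
  refine ⟨max j₀ 1, le_max_right _ _, ?_⟩
  intro j hj
  have hj1 : 1 ≤ j := le_trans (le_max_right _ _) hj
  obtain ⟨hA, hB, hC⟩ := hj₀ j (le_trans (le_max_left _ _) hj)
  set n := SigL (μ j) with hn
  have h0 : 0 < n := by
    rcases Nat.eq_zero_or_pos n with h0 | h0
    · rw [h0] at hA
      norm_num at hA
      linarith
    · exact h0
  have hnR : (0:ℝ) < (n:ℝ) := by exact_mod_cast h0
  have hjc₂ : (j:ℝ)/c₂ < (n:ℝ) := by
    rw [div_lt_iff₀ hc₂]
    have := (div_lt_iff₀ hnR).mp hB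
    linarith
  have hjc₁ : (n:ℝ) < (j:ℝ)/c₁ := by
    rw [lt_div_iff₀ hc₁]
    have := (lt_div_iff₀ hnR).mp hA
    linarith
  constructor
  · -- lower bound
    have hceil2 : ⌈(j:ℝ)/c₂⌉₊ ≤ n := Nat.ceil_le.mpr hjc₂.le
    rcases Nat.eq_zero_or_pos (⌈(j:ℝ)/c₂⌉₊ - 1) with h0' | h0'
    · rw [h0', hlam0]; exact hC
    · exact hSigL_le (μ j) _ h0' (by omega)
  · -- upper bound
    have hceil1 : n < ⌈(j:ℝ)/c₁⌉₊ := by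
      have h := Nat.le_ceil ((j:ℝ)/c₁)
      have : (n:ℝ) < (⌈(j:ℝ)/c₁⌉₊ : ℝ) := lt_of_lt_of_le hjc₁ h
      exact_mod_cast this
    by_contra h
    push_neg at h
    have := hle_SigL (μ j) ⌈(j:ℝ)/c₁⌉₊ (by omega) h
    omega
end

section
/- Let M ∈ 𝓛𝓒 with quotient sequence μ strictly positive and μ₁ > 1, and define Γ_M(s) := sup{t ≥ 0 : Σ_M(e^t) ≤ s}. Then for every j ∈ ℕ and every s with j ≤ s < j+1, one has Γ_M(s) = log(μ_{j+1}). -/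
theorem stmt_15 (M : ℕ → ℝ) (μ : ℕ → ℝ) (Sig : ℝ → ℕ) (Γ : ℝ → ℝ)
    (hMpos : ∀ j, 0 < M j) (hM0 : M 0 = 1) (hMnorm : M 0 ≤ M 1)
    (hMlc : ∀ j : ℕ, (M (j+1))^2 ≤ M j * M (j+2))
    (hMgrow : Filter.Tendsto (fun j : ℕ => (M j) ^ (1/(j:ℝ))) Filter.atTop Filter.atTop)
    (hμ0 : μ 0 = 1) (hμ : ∀ j : ℕ, μ (j+1) = M (j+1) / M j)
    (hμ1 : 1 < μ 1)
    (hSig : ∀ t : ℝ, Sig t = Set.ncard {j : ℕ | 1 ≤ j ∧ μ j ≤ t})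
    (hΓ : ∀ s : ℝ, Γ s = sSup {t : ℝ | 0 ≤ t ∧ (Sig (Real.exp t) : ℝ) ≤ s}) :
    ∀ j : ℕ, ∀ s : ℝ, (j : ℝ) ≤ s → s < (j : ℝ) + 1 → Γ s = Real.log (μ (j+1)) := by
  -- μ is monotone
  have hmono : Monotone μ := by
    apply monotone_nat_of_le_succ
    intro n
    cases n with
    | zero => rw [hμ0]; exact hμ1.le
    | succ k =>
      rw [hμ k, hμ (k+1)]
      rw [div_le_div_iff₀ (hMpos k) (hMpos (k+1))]
      have := hMlc k
      nlinarith [hMpos k, hMpos (k+1), hMpos (k+2)]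
  have hμge1 : ∀ n, 1 ≤ μ n := by
    intro n
    cases n with
    | zero => rw [hμ0]
    | succ k => exact le_trans hμ1.le (hmono (Nat.one_le_iff_ne_zero.mpr (Nat.succ_ne_zero k)))
  have hμpos : ∀ n, 0 < μ n := fun n => lt_of_lt_of_le one_pos (hμge1 n)
  -- M j ≤ μ j ^ j
  have hMle : ∀ n : ℕ, M n ≤ μ n ^ n := by
    intro n
    induction n with
    | zero => simp [hM0]
    | succ k ih =>
      have hMk : M (k+1) = μ (k+1) * M k := by
        rw [hμ k, div_mul_cancel₀ _ (hMpos k).ne']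
      rw [hMk]
      calc μ (k+1) * M k ≤ μ (k+1) * μ k ^ k := by
            exact mul_le_mul_of_nonneg_left ih (hμpos (k+1)).le
        _ ≤ μ (k+1) * μ (k+1) ^ k := by
            refine mul_le_mul_of_nonneg_left ?_ (hμpos (k+1)).le
            exact pow_le_pow_left₀ (hμpos k).le (hmono (Nat.le_succ k)) k
        _ = μ (k+1) ^ (k+1) := by ring
  -- μ is unbounded
  have hub : ∀ x : ℝ, ∃ N : ℕ, x < μ N := by
    intro x
    have h1 : ∀ᶠ n : ℕ in Filter.atTop, x < (M n) ^ (1/(n:ℝ)) :=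
      hMgrow.eventually_gt_atTop x
    have h2 : ∀ᶠ n : ℕ in Filter.atTop, 1 ≤ n := Filter.eventually_ge_atTop 1
    obtain ⟨n, hn1, hn2⟩ := (h1.and h2).exists
    refine ⟨n, lt_of_lt_of_le hn1 ?_⟩
    have hn0 : (n : ℝ) ≠ 0 := Nat.cast_ne_zero.mpr (Nat.one_le_iff_ne_zero.mp hn2)
    calc (M n) ^ (1/(n:ℝ)) ≤ (μ n ^ n) ^ (1/(n:ℝ)) :=
          Real.rpow_le_rpow (hMpos n).le (hMle n) (by positivity)
      _ = μ n := by
          rw [← Real.rpow_natCast (μ n) n, ← Real.rpow_mul (hμpos n).le]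
          rw [mul_one_div, div_self hn0, Real.rpow_one]
  -- the sets in Sig are finite
  have hfin : ∀ x : ℝ, {i : ℕ | 1 ≤ i ∧ μ i ≤ x}.Finite := by
    intro x
    obtain ⟨N, hN⟩ := hub x
    refine Set.Finite.subset (Set.finite_Iio N) ?_
    intro i hi
    simp only [Set.mem_Iio]
    by_contra h
    push_neg at h
    exact absurd (hmono h) (not_le.mpr (lt_of_le_of_lt hi.2 hN))
  -- key characterization of Sig
  have hkey : ∀ (j : ℕ) (x : ℝ), Sig x ≤ j ↔ x < μ (j+1) := by
    intro j x
    rw [hSig]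
    constructor
    · intro h
      by_contra hc
      push_neg at hc
      have hsub : (Finset.Icc 1 (j+1) : Set ℕ) ⊆ {i : ℕ | 1 ≤ i ∧ μ i ≤ x} := by
        intro i hi
        simp only [Finset.coe_Icc, Set.mem_Icc] at hi
        exact ⟨hi.1, le_trans (hmono hi.2) hc⟩
      have := Set.ncard_le_ncard hsub (hfin x)
      rw [Set.ncard_coe_finset, Nat.card_Icc] at this
      omega
    · intro h
      have hsub : {i : ℕ | 1 ≤ i ∧ μ i ≤ x} ⊆ (Finset.Icc 1 j : Set ℕ) := by
        intro i hi
        simp only [Finset.coe_Icc, Set.mem_Icc]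
        refine ⟨hi.1, ?_⟩
        by_contra hij
        push_neg at hij
        exact absurd (le_trans (hmono hij) hi.2) (not_le.mpr h)
      have := Set.ncard_le_ncard hsub (Finset.Icc 1 j).finite_toSet
      rw [Set.ncard_coe_finset, Nat.card_Icc] at this
      omega
  intro j s hjs hsj
  have hL : 0 < Real.log (μ (j+1)) :=
    Real.log_pos (lt_of_lt_of_le hμ1 (hmono (by omega : 1 ≤ j+1)))
  have hset : {t : ℝ | 0 ≤ t ∧ (Sig (Real.exp t) : ℝ) ≤ s} =
      Set.Ico 0 (Real.log (μ (j+1))) := by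
    ext t
    simp only [Set.mem_setOf_eq, Set.mem_Ico]
    constructor
    · rintro ⟨ht0, hts⟩
      refine ⟨ht0, ?_⟩
      have h1 : (Sig (Real.exp t) : ℝ) < (j : ℝ) + 1 := lt_of_le_of_lt hts hsj
      have h2 : Sig (Real.exp t) ≤ j := by exact_mod_cast Nat.lt_succ_iff.mp (by exact_mod_cast h1)
      have := (hkey j (Real.exp t)).mp h2
      rwa [← Real.lt_log_iff_exp_lt (hμpos (j+1))] at this
    · rintro ⟨ht0, htL⟩
      refine ⟨ht0, ?_⟩
      have hx : Real.exp t < μ (j+1) := (Real.lt_log_iff_exp_lt (hμpos (j+1))).mp htL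
      have h2 : Sig (Real.exp t) ≤ j := (hkey j (Real.exp t)).mpr hx
      calc (Sig (Real.exp t) : ℝ) ≤ (j : ℝ) := by exact_mod_cast h2
        _ ≤ s := hjs
  rw [hΓ, hset, csSup_Ico hL]
end

section
/- Let M ∈ 𝓛𝓒 with quotient sequence μ and dual sequence D defined by quotients δ_{j+1} := Σ_M(j) for integers j ≥ μ₁ and δ_{j+1} := 1 for −1 ≤ j < μ₁. Then there exists t₀ > 0 such that for all t ≥ t₀, Γ_M(t) ≤ log(Σ_D(t)) ≤ Γ_M(t) + 1, and consequently Γ_M(t)/log(Σ_D(t)) → 1 as t → ∞. -/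
/-!
The quotients `μ_j = M_j / M_{j-1}` of a log-concave sequence increase, and since `M_j` is the
product of the first `j` of them, the growth of `M_j^{1/j}` forces `μ_j → ∞`. Then
`Σ_M(x) ≤ m ↔ x < μ_{m+1}`, which gives `Γ_M(t) = log μ_{⌊t⌋+1}` and, because
`δ_{i+1} ≤ t ↔ i < μ_{⌊t⌋+1}`, also `Σ_D(t) = ⌈μ_{⌊t⌋+1}⌉`. Both bounds then follow from
`x ≤ ⌈x⌉ < 2x ≤ e x` for `x ≥ 1`.
-/

open Filter Real Set Asymptotics Topology

theorem monotone_div_of_sq_le_mul {M : ℕ → ℝ} (hpos : ∀ j, 0 < M j)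
    (hlc : ∀ j, M (j + 1) ^ 2 ≤ M j * M (j + 2)) : Monotone fun j => M (j + 1) / M j := by
  refine monotone_nat_of_le_succ fun j => ?_
  rw [div_le_div_iff₀ (hpos _) (hpos _)]
  nlinarith [hlc j]

theorem prod_range_succ_div {M : ℕ → ℝ} (hM : ∀ j, M j ≠ 0) (j : ℕ) :
    ∏ k ∈ Finset.range j, M (k + 1) / M k = M j / M 0 := by
  induction j with
  | zero => simp [hM 0]
  | succ j ih => rw [Finset.prod_range_succ, ih]; field_simp [hM j]

theorem tendsto_atTop_of_tendsto_prod_rpow {ν : ℕ → ℝ} (hν : ∀ k, 0 ≤ ν k) (hmono : Monotone ν)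
    (h : Tendsto (fun j : ℕ => (∏ k ∈ Finset.range j, ν k) ^ (1 / (j : ℝ))) atTop atTop) :
    Tendsto ν atTop atTop := by
  refine tendsto_atTop_atTop_of_monotone hmono fun B => ?_
  by_contra! hB
  obtain ⟨j, hj, hj0⟩ := ((h.eventually_gt_atTop B).and (eventually_ne_atTop 0)).exists
  have hB0 : 0 ≤ B := (hν 0).trans (hB 0).le
  have hprod : ∏ k ∈ Finset.range j, ν k ≤ B ^ j := by
    simpa using Finset.prod_le_prod (s := Finset.range j) (fun k _ => hν k) fun k _ => (hB k).le
  have : (∏ k ∈ Finset.range j, ν k) ^ (1 / (j : ℝ)) ≤ B := calc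
    _ ≤ (B ^ j) ^ (1 / (j : ℝ)) := by gcongr; exact Finset.prod_nonneg fun k _ => hν k
    _ = B := by rw [one_div, pow_rpow_inv_natCast hB0 hj0]
  linarith

theorem tendsto_div_nhds_one_of_le_of_le_add {α : Type*} {l : Filter α} {f g : α → ℝ} {c : ℝ}
    (hf : Tendsto f l atTop) (hfg : ∀ᶠ x in l, f x ≤ g x ∧ g x ≤ f x + c) :
    Tendsto (f / g) l (𝓝 1) := by
  have hg : Tendsto g l atTop := tendsto_atTop_mono' l (hfg.mono fun _ h => h.1) hf
  have hbdd : (f - g) =O[l] fun _ => (1 : ℝ) := by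
    refine IsBigO.of_bound c (hfg.mono fun x h => ?_)
    rw [Pi.sub_apply, norm_one, mul_one, Real.norm_eq_abs, abs_le]
    constructor <;> linarith
  refine (isEquivalent_iff_tendsto_one (hg.eventually_ne_atTop 0)).mp ?_
  exact hbdd.trans_isLittleO ((isLittleO_one_left_iff ℝ).mpr (tendsto_norm_atTop_atTop.comp hg))

theorem sSup_setOf_exp_lt {x : ℝ} (hx : 1 < x) : sSup {s : ℝ | 0 ≤ s ∧ exp s < x} = log x := by
  have : {s : ℝ | 0 ≤ s ∧ exp s < x} = Ico 0 (log x) := by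
    ext s
    simp [lt_log_iff_exp_lt (by linarith : 0 < x)]
  rw [this, csSup_Ico (log_pos hx)]

theorem log_natCeil_le_log_add_one {x : ℝ} (hx : 1 ≤ x) : log ⌈x⌉₊ ≤ log x + 1 := calc
  log ⌈x⌉₊ ≤ log (2 * x) := by
    refine log_le_log (Nat.cast_pos.2 (Nat.ceil_pos.2 (by linarith))) ?_
    linarith [Nat.ceil_lt_add_one (by linarith : 0 ≤ x)]
  _ = log x + log 2 := by rw [log_mul two_ne_zero (by linarith), add_comm]
  _ ≤ log x + 1 := by linarith [log_two_lt_d9]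

noncomputable def countingFn (μ : ℕ → ℝ) (t : ℝ) : ℕ := Set.ncard {j : ℕ | 1 ≤ j ∧ μ j ≤ t}

section countingFn

variable {μ : ℕ → ℝ}

theorem countingFn_le_iff (hmono : MonotoneOn μ (Ici 1)) (htop : Tendsto μ atTop atTop)
    {x : ℝ} {m : ℕ} : countingFn μ x ≤ m ↔ x < μ (m + 1) := by
  constructor
  · intro h
    by_contra! hx
    -- `ncard` of an infinite set is `0`, so the bound below needs finiteness.
    have hfin : {j : ℕ | 1 ≤ j ∧ μ j ≤ x}.Finite := by
      have := (Nat.cofinite_eq_atTop ▸ htop).eventually_gt_atTop x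
      exact (eventually_cofinite.mp this).subset fun j hj => not_lt.2 hj.2
    have hsub : Icc 1 (m + 1) ⊆ {j : ℕ | 1 ≤ j ∧ μ j ≤ x} := fun j ⟨h1, h2⟩ =>
      ⟨h1, (hmono (mem_Ici.2 h1) (mem_Ici.2 (by omega)) h2).trans hx⟩
    have := ncard_le_ncard hsub hfin
    rw [ncard_Icc_nat] at this
    unfold countingFn at h
    omega
  · intro hx
    have hsub : {j : ℕ | 1 ≤ j ∧ μ j ≤ x} ⊆ Icc 1 m := fun j ⟨h1, h2⟩ => by
      refine ⟨h1, not_lt.1 fun hjm => ?_⟩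
      exact (hmono (mem_Ici.2 (by omega)) (mem_Ici.2 h1) hjm).trans h2 |>.not_gt hx
    calc countingFn μ x ≤ (Icc 1 m).ncard := ncard_le_ncard hsub (finite_Icc 1 m)
      _ = m := by rw [ncard_Icc_nat]; omega

theorem sSup_setOf_countingFn_exp_le (hmono : MonotoneOn μ (Ici 1))
    (htop : Tendsto μ atTop atTop) {t : ℝ} (ht : 0 ≤ t) (h1 : 1 < μ (⌊t⌋₊ + 1)) :
    sSup {s : ℝ | 0 ≤ s ∧ (countingFn μ (exp s) : ℝ) ≤ t} = log (μ (⌊t⌋₊ + 1)) := by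
  simp_rw [← Nat.le_floor_iff ht, countingFn_le_iff hmono htop]
  exact sSup_setOf_exp_lt h1

theorem countingFn_dual_eq_natCeil {δ : ℕ → ℝ} (hmono : MonotoneOn μ (Ici 1))
    (htop : Tendsto μ atTop atTop)
    (hδhigh : ∀ j : ℕ, μ 1 ≤ (j : ℝ) → δ (j + 1) = (countingFn μ (j : ℝ) : ℝ))
    (hδlow : ∀ j : ℕ, (j : ℝ) < μ 1 → δ (j + 1) = 1) {t : ℝ} (ht : 1 ≤ t) :
    countingFn δ t = ⌈μ (⌊t⌋₊ + 1)⌉₊ := by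
  have hδ : ∀ i : ℕ, δ (i + 1) ≤ t ↔ (i : ℝ) < μ (⌊t⌋₊ + 1) := by
    intro i
    rcases lt_or_ge (i : ℝ) (μ 1) with hi | hi
    · rw [hδlow i hi]
      have hμ1 : μ 1 ≤ μ (⌊t⌋₊ + 1) := hmono (mem_Ici.2 le_rfl) (mem_Ici.2 (by omega)) (by omega)
      exact iff_of_true ht (hi.trans_le hμ1)
    · rw [hδhigh i hi, ← Nat.le_floor_iff (by linarith), countingFn_le_iff hmono htop]
  have hset : {j : ℕ | 1 ≤ j ∧ δ j ≤ t} = Icc 1 ⌈μ (⌊t⌋₊ + 1)⌉₊ := by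
    ext j
    simp only [mem_ofPred_eq, mem_Icc]
    refine and_congr_right fun hj => ?_
    obtain ⟨i, rfl⟩ := Nat.exists_eq_add_of_le' hj
    rw [hδ, ← Nat.lt_ceil]
    omega
  rw [countingFn, hset, ncard_Icc_nat]
  omega

end countingFn

theorem stmt_16_general (M : ℕ → ℝ) (μ : ℕ → ℝ) (Sig : ℝ → ℕ) (Γ : ℝ → ℝ)
    (δ : ℕ → ℝ) (SigD : ℝ → ℕ)
    (hMpos : ∀ j, 0 < M j) (hM0 : M 0 = 1)
    (hMlc : ∀ j : ℕ, (M (j+1))^2 ≤ M j * M (j+2))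
    (hMgrow : Filter.Tendsto (fun j : ℕ => (M j) ^ (1/(j:ℝ))) Filter.atTop Filter.atTop)
    (hμ : ∀ j : ℕ, μ (j+1) = M (j+1) / M j)
    (hSig : ∀ t : ℝ, Sig t = Set.ncard {j : ℕ | 1 ≤ j ∧ μ j ≤ t})
    (hΓ : ∀ s : ℝ, Γ s = sSup {t : ℝ | 0 ≤ t ∧ (Sig (Real.exp t) : ℝ) ≤ s})
    (hδhigh : ∀ j : ℕ, μ 1 ≤ (j : ℝ) → δ (j+1) = (Sig (j : ℝ) : ℝ))
    (hδlow : ∀ j : ℕ, (j : ℝ) < μ 1 → δ (j+1) = 1)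
    (hSigD : ∀ t : ℝ, SigD t = Set.ncard {j : ℕ | 1 ≤ j ∧ δ j ≤ t}) :
    (∃ t₀ > (0:ℝ), ∀ t ≥ t₀,
        Γ t ≤ Real.log (SigD t : ℝ) ∧ Real.log (SigD t : ℝ) ≤ Γ t + 1) ∧
      Filter.Tendsto (fun t : ℝ => Γ t / Real.log (SigD t : ℝ))
        Filter.atTop (nhds 1) := by
  have hmono : Monotone fun k => μ (k + 1) := by
    simpa only [hμ] using monotone_div_of_sq_le_mul hMpos hMlc
  have hprod (j : ℕ) : M j = ∏ k ∈ Finset.range j, μ (k + 1) := by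
    simp only [hμ, prod_range_succ_div (fun k => (hMpos k).ne'), hM0, div_one]
  have hpos (k : ℕ) : 0 ≤ μ (k + 1) := by rw [hμ]; exact (div_pos (hMpos _) (hMpos _)).le
  have htop' : Tendsto (fun k => μ (k + 1)) atTop atTop :=
    tendsto_atTop_of_tendsto_prod_rpow hpos hmono (by simpa only [hprod] using hMgrow)
  have htop : Tendsto μ atTop atTop := (tendsto_add_atTop_iff_nat 1).mp htop'
  have hmonoOn : MonotoneOn μ (Ici 1) := monotone_add_nat_iff_monotoneOn_nat_Ici.mp hmono
  obtain rfl : Sig = countingFn μ := funext hSig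
  obtain rfl : SigD = countingFn δ := funext hSigD
  have hx : Tendsto (fun t : ℝ => μ (⌊t⌋₊ + 1)) atTop atTop := htop'.comp tendsto_nat_floor_atTop
  have hlarge : ∀ᶠ t : ℝ in atTop, 1 ≤ t ∧ 1 < μ (⌊t⌋₊ + 1) :=
    (eventually_ge_atTop 1).and (hx.eventually_gt_atTop 1)
  have hΓeq : ∀ᶠ t in atTop, Γ t = log (μ (⌊t⌋₊ + 1)) := hlarge.mono fun t ⟨ht, h1⟩ => by
    rw [hΓ, sSup_setOf_countingFn_exp_le hmonoOn htop (by linarith) h1]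
  have hbounds : ∀ᶠ t in atTop,
      Γ t ≤ log (countingFn δ t) ∧ log (countingFn δ t) ≤ Γ t + 1 := by
    filter_upwards [hlarge, hΓeq] with t ⟨ht, h1⟩ hΓt
    rw [hΓt, countingFn_dual_eq_natCeil hmonoOn htop hδhigh hδlow ht]
    exact ⟨log_le_log (by linarith) (Nat.le_ceil _), log_natCeil_le_log_add_one h1.le⟩
  have hΓtop : Tendsto Γ atTop atTop :=
    (tendsto_log_atTop.comp hx).congr' (hΓeq.mono fun _ h => h.symm)
  refine ⟨?_, tendsto_div_nhds_one_of_le_of_le_add hΓtop hbounds⟩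
  obtain ⟨t₀, ht₀⟩ := eventually_atTop.mp hbounds
  exact ⟨max t₀ 1, by positivity, fun t ht => ht₀ t (le_of_max_le_left ht)⟩

theorem stmt_16 (M : ℕ → ℝ) (μ : ℕ → ℝ) (Sig : ℝ → ℕ) (Γ : ℝ → ℝ)
    (δ D : ℕ → ℝ) (SigD : ℝ → ℕ)
    (hMpos : ∀ j, 0 < M j) (hM0 : M 0 = 1) (hMnorm : M 0 ≤ M 1)
    (hMlc : ∀ j : ℕ, (M (j+1))^2 ≤ M j * M (j+2))
    (hMgrow : Filter.Tendsto (fun j : ℕ => (M j) ^ (1/(j:ℝ))) Filter.atTop Filter.atTop)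
    (hμ0 : μ 0 = 1) (hμ : ∀ j : ℕ, μ (j+1) = M (j+1) / M j)
    (hSig : ∀ t : ℝ, Sig t = Set.ncard {j : ℕ | 1 ≤ j ∧ μ j ≤ t})
    (hΓ : ∀ s : ℝ, Γ s = sSup {t : ℝ | 0 ≤ t ∧ (Sig (Real.exp t) : ℝ) ≤ s})
    (hδ0 : δ 0 = 1)
    (hδhigh : ∀ j : ℕ, μ 1 ≤ (j : ℝ) → δ (j+1) = (Sig (j : ℝ) : ℝ))
    (hδlow : ∀ j : ℕ, (j : ℝ) < μ 1 → δ (j+1) = 1)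
    (hD : ∀ j : ℕ, D j = ∏ k ∈ Finset.range (j+1), δ k)
    (hSigD : ∀ t : ℝ, SigD t = Set.ncard {j : ℕ | 1 ≤ j ∧ δ j ≤ t}) :
    (∃ t₀ > (0:ℝ), ∀ t ≥ t₀,
        Γ t ≤ Real.log (SigD t : ℝ) ∧ Real.log (SigD t : ℝ) ≤ Γ t + 1) ∧
      Filter.Tendsto (fun t : ℝ => Γ t / Real.log (SigD t : ℝ))
        Filter.atTop (nhds 1) :=
  stmt_16_general M μ Sig Γ δ SigD hMpos hM0 hMlc hMgrow hμ hSig hΓ hδhigh hδlow hSigD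
end

section
/- Let M ∈ 𝓛𝓒. Then there exist C ≥ 1 and ℓ > 1 such that 2ℓ·ω_M(s) ≤ ω_M(s^ℓ) + 2ℓC for all s ≥ 0 if and only if there exist A ≥ 1 and ℓ > 1 such that M_{2j} ≤ A·M_j^{2ℓ} for all j ∈ ℕ. (This characterizes the ∇₂-condition for the associated N-function F_M.) -/
open Filter Real

private lemma bdd_aux (M : ℕ → ℝ) (hMpos : ∀ j, 0 < M j)
    (hMgrow : Filter.Tendsto (fun j : ℕ => (M j) ^ (1/(j:ℝ))) Filter.atTop Filter.atTop)
    (t : ℝ) (ht : 0 < t) :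
    BddAbove (Set.range fun j : ℕ => Real.log (t^j / M j)) := by
  have hlog : Tendsto (fun j : ℕ => (1/(j:ℝ)) * Real.log (M j)) atTop atTop := by
    have h := Real.tendsto_log_atTop.comp hMgrow
    refine h.congr fun j => ?_
    simp [Function.comp, Real.log_rpow (hMpos j)]
  have hev : ∀ᶠ j : ℕ in atTop, Real.log (t^j / M j) ≤ -(j:ℝ) := by
    filter_upwards [hlog.eventually_ge_atTop (Real.log t + 1),
      Filter.eventually_ge_atTop 1] with j hj hj1
    have hjpos : (0:ℝ) < (j:ℝ) := by exact_mod_cast hj1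
    rw [Real.log_div (pow_ne_zero _ (ne_of_gt ht)) (ne_of_gt (hMpos j)), Real.log_pow]
    have h2 : (j:ℝ) * (Real.log t + 1) ≤ Real.log (M j) := by
      have := mul_le_mul_of_nonneg_left hj hjpos.le
      calc (j:ℝ) * (Real.log t + 1) ≤ (j:ℝ) * ((1/(j:ℝ)) * Real.log (M j)) := this
        _ = Real.log (M j) := by field_simp
    nlinarith
  refine Filter.bddAbove_range_of_tendsto_atTop_atBot ?_
  refine tendsto_atBot_mono' _ hev ?_
  exact Filter.tendsto_neg_atBot_iff.mpr tendsto_natCast_atTop_atTop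

theorem stmt_18 (M : ℕ → ℝ) (ω : ℝ → ℝ)
    (hMpos : ∀ j, 0 < M j) (hM0 : M 0 = 1) (hMnorm : M 0 ≤ M 1)
    (hMlc : ∀ j : ℕ, (M (j+1))^2 ≤ M j * M (j+2))
    (hMgrow : Filter.Tendsto (fun j : ℕ => (M j) ^ (1/(j:ℝ))) Filter.atTop Filter.atTop)
    (hω : ∀ t : ℝ, 0 < t → ω t = ⨆ j : ℕ, Real.log (t^j / M j)) (hω0 : ω 0 = 0) :
    (∃ C ℓ : ℝ, 1 ≤ C ∧ 1 < ℓ ∧ ∀ s ≥ (0:ℝ), 2 * ℓ * ω s ≤ ω (s ^ ℓ) + 2 * ℓ * C) ↔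
      (∃ A ℓ : ℝ, 1 ≤ A ∧ 1 < ℓ ∧ ∀ j : ℕ, M (2*j) ≤ A * (M j) ^ (2*ℓ)) := by
  set m : ℕ → ℝ := fun j => Real.log (M j) with hm
  -- differences d i = m (i+1) - m i are nondecreasing
  set d : ℕ → ℝ := fun i => m (i+1) - m i with hd
  have hdmono : Monotone d := by
    apply monotone_nat_of_le_succ
    intro i
    have h := hMlc i
    have h2 : 2 * m (i+1) ≤ m i + m (i+2) := by
      have hl := Real.log_le_log (pow_pos (hMpos (i+1)) 2) h
      rw [Real.log_pow, Real.log_mul (ne_of_gt (hMpos i)) (ne_of_gt (hMpos (i+2)))] at hl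
      simpa [hm] using hl
    simp only [hd]
    linarith
  -- summed bounds
  have hkey : ∀ k n : ℕ, (n:ℝ) * d k ≤ m (k+n) - m k ∧ m (k+n) - m k ≤ (n:ℝ) * d (k+n) := by
    intro k n
    induction n with
    | zero => simp
    | succ n ih =>
      obtain ⟨ih1, ih2⟩ := ih
      have h1 : d k ≤ d (k+n) := hdmono (by omega)
      have h2 : d (k+n) ≤ d (k+n+1) := hdmono (by omega)
      have hstep : m (k+n+1) - m (k+n) = d (k+n) := by simp [hd]
      rw [show k+(n+1) = k+n+1 from rfl]
      constructor
      · push_cast; nlinarith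
      · push_cast; nlinarith
  have hbdd := bdd_aux M hMpos hMgrow
  -- each term is ≤ ω t
  have hterm : ∀ t : ℝ, 0 < t → ∀ j : ℕ, Real.log (t^j / M j) ≤ ω t := by
    intro t ht j
    rw [hω t ht]
    exact le_ciSup (hbdd t ht) j
  have hlogdiv : ∀ (t : ℝ), 0 < t → ∀ j : ℕ, Real.log (t^j / M j) = (j:ℝ) * Real.log t - m j := by
    intro t ht j
    rw [Real.log_div (pow_ne_zero _ (ne_of_gt ht)) (ne_of_gt (hMpos j)), Real.log_pow]
  constructor
  · rintro ⟨C, ℓ, hC, hℓ, H⟩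
    have hℓ0 : (0:ℝ) < ℓ := lt_trans one_pos hℓ
    refine ⟨Real.exp (2*ℓ*C), ℓ, Real.one_le_exp (by nlinarith), hℓ, fun j => ?_⟩
    -- choose t = M(2j+1)/M(2j); ω t ≤ 2j log t - m (2j)
    set t : ℝ := M (2*j+1) / M (2*j) with htdef
    have ht : 0 < t := div_pos (hMpos _) (hMpos _)
    have hlogt : Real.log t = d (2*j) := by
      simp [htdef, hd, Real.log_div (ne_of_gt (hMpos _)) (ne_of_gt (hMpos _)), hm]
    have hωt : ω t ≤ (2*j : ℝ) * Real.log t - m (2*j) := by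
      rw [hω t ht]
      apply ciSup_le
      intro k
      rw [hlogdiv t ht k, hlogt]
      rcases le_total k (2*j) with hk | hk
      · have := (hkey k (2*j - k)).2
        have hke : k + (2*j - k) = 2*j := by omega
        rw [hke] at this
        have hc : ((2*j - k : ℕ):ℝ) = (2*j:ℝ) - k := by
          push_cast [Nat.cast_sub hk]; ring
        rw [hc] at this
        push_cast
        nlinarith
      · have := (hkey (2*j) (k - 2*j)).1
        have hke : 2*j + (k - 2*j) = k := by omega
        rw [hke] at this
        have hc : ((k - 2*j : ℕ):ℝ) = (k:ℝ) - 2*j := by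
          push_cast [Nat.cast_sub hk]; ring
        rw [hc] at this
        push_cast
        nlinarith
    -- use hypothesis at s = t^(1/ℓ)
    set s : ℝ := t ^ (1/ℓ) with hsdef
    have hs : 0 < s := Real.rpow_pos_of_pos ht _
    have hsl : s ^ ℓ = t := by
      rw [hsdef, ← Real.rpow_mul ht.le, one_div_mul_cancel (ne_of_gt hℓ0), Real.rpow_one]
    have hH := H s hs.le
    rw [hsl] at hH
    have hlow := hterm s hs j
    rw [hlogdiv s hs j] at hlow
    have hlogs : Real.log s = (1/ℓ) * Real.log t := Real.log_rpow ht _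
    have hmul := mul_le_mul_of_nonneg_left hlow (by positivity : (0:ℝ) ≤ 2*ℓ)
    have hL : 2*ℓ*((j:ℝ)*Real.log s - m j) = 2*(j:ℝ)*Real.log t - 2*ℓ*m j := by
      rw [hlogs]; field_simp
    have hm2 : m (2*j) ≤ 2*ℓ*(m j) + 2*ℓ*C := by
      rw [hL] at hmul
      linarith
    calc M (2*j) = Real.exp (m (2*j)) := (Real.exp_log (hMpos _)).symm
      _ ≤ Real.exp (2*ℓ*C + 2*ℓ*(m j)) := Real.exp_le_exp.mpr (by linarith)
      _ = Real.exp (2*ℓ*C) * Real.exp (2*ℓ*(m j)) := Real.exp_add _ _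
      _ = Real.exp (2*ℓ*C) * (M j) ^ (2*ℓ) := by
          rw [Real.rpow_def_of_pos (hMpos j)]
          simp only [hm]
          ring_nf
  · rintro ⟨A, ℓ, hA, hℓ, H⟩
    have hℓ0 : (0:ℝ) < ℓ := lt_trans one_pos hℓ
    refine ⟨max 1 (Real.log A), ℓ, le_max_left _ _, hℓ, fun s hs => ?_⟩
    set C : ℝ := max 1 (Real.log A) with hC
    have hC1 : (1:ℝ) ≤ C := le_max_left _ _
    have hlogA : Real.log A ≤ C := le_max_right _ _
    rcases eq_or_lt_of_le hs with hs0 | hs0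
    · rw [← hs0]
      rw [Real.zero_rpow (ne_of_gt hℓ0), hω0]
      nlinarith
    · have hsl : (0:ℝ) < s ^ ℓ := Real.rpow_pos_of_pos hs0 _
      have hmain : ∀ j : ℕ, 2 * ℓ * Real.log (s^j / M j) ≤ ω (s ^ ℓ) + 2 * ℓ * C := by
        intro j
        have h1 := hterm (s ^ ℓ) hsl (2*j)
        rw [hlogdiv _ hsl (2*j), Real.log_rpow hs0] at h1
        rw [hlogdiv _ hs0 j]
        have h2 : m (2*j) ≤ Real.log A + 2*ℓ * m j := by
          have := Real.log_le_log (hMpos _) (H j)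
          rwa [Real.log_mul (by linarith : (0:ℝ) < A).ne' (Real.rpow_pos_of_pos (hMpos j) _).ne',
            Real.log_rpow (hMpos j)] at this
        push_cast at h1 ⊢
        nlinarith
      have hωs : ω s ≤ (ω (s ^ ℓ) + 2 * ℓ * C) / (2*ℓ) := by
        rw [hω s hs0]
        apply ciSup_le
        intro j
        rw [le_div_iff₀ (by positivity)]
        calc Real.log (s^j / M j) * (2*ℓ) = 2 * ℓ * Real.log (s^j / M j) := by ring
          _ ≤ _ := hmain j
      calc 2 * ℓ * ω s ≤ 2 * ℓ * ((ω (s ^ ℓ) + 2 * ℓ * C) / (2*ℓ)) := by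
            apply mul_le_mul_of_nonneg_left hωs (by positivity)
        _ = ω (s ^ ℓ) + 2 * ℓ * C := by field_simp
end

section
/- Let M ∈ 𝓛𝓒 with quotients μ and counting function Σ_M. Then there exist K > 0 and t₀ > 0 with Σ_M(e^t)² ≤ Σ_M(e^{Kt}) for all t ≥ t₀ if and only if there exist A > 0 and j₀ ∈ ℕ such that μ_{j²} ≤ μ_j^A for all j ≥ j₀. -/
theorem stmt_19 (M : ℕ → ℝ) (μ : ℕ → ℝ) (Sig : ℝ → ℕ)
    (hMpos : ∀ j, 0 < M j) (hM0 : M 0 = 1) (hMnorm : M 0 ≤ M 1)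
    (hMlc : ∀ j : ℕ, (M (j+1))^2 ≤ M j * M (j+2))
    (hMgrow : Filter.Tendsto (fun j : ℕ => (M j) ^ (1/(j:ℝ))) Filter.atTop Filter.atTop)
    (hμ0 : μ 0 = 1) (hμ : ∀ j : ℕ, μ (j+1) = M (j+1) / M j)
    (hSig : ∀ t : ℝ, Sig t = Set.ncard {j : ℕ | 1 ≤ j ∧ μ j ≤ t}) :
    (∃ K > (0:ℝ), ∃ t₀ > (0:ℝ), ∀ t ≥ t₀,
        ((Sig (Real.exp t) : ℝ))^2 ≤ (Sig (Real.exp (K * t)) : ℝ)) ↔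
      (∃ A > (0:ℝ), ∃ j₀ : ℕ, ∀ j ≥ j₀, μ (j^2) ≤ (μ j) ^ A) := by
  have hμpos : ∀ j, 0 < μ j := by
    intro j
    cases j with
    | zero => rw [hμ0]; norm_num
    | succ n => rw [hμ]; exact div_pos (hMpos _) (hMpos _)
  have hμmono : Monotone μ := by
    apply monotone_nat_of_le_succ
    intro j
    cases j with
    | zero =>
      rw [hμ0, hμ 0, hM0, div_one]
      linarith [hMnorm, hM0]
    | succ n =>
      rw [hμ, hμ]
      rw [div_le_div_iff₀ (hMpos _) (hMpos _)]
      nlinarith [hMlc n, hMpos n, hMpos (n+1), hMpos (n+2)]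
  have hμ1 : ∀ j, 1 ≤ μ j := fun j => hμ0 ▸ hμmono (Nat.zero_le j)
  -- M j ≤ μ j ^ j
  have hMμ : ∀ j, M j ≤ μ j ^ j := by
    intro j
    induction j with
    | zero => rw [hM0]; simp
    | succ n ih =>
      have hstep : M (n+1) = μ (n+1) * M n := by
        rw [hμ, div_mul_cancel₀ _ (hMpos n).ne']
      calc M (n+1) = μ (n+1) * M n := hstep
        _ ≤ μ (n+1) * μ n ^ n := by
            have := hμpos (n+1); nlinarith
        _ ≤ μ (n+1) * μ (n+1) ^ n := by
            have h1 : μ n ^ n ≤ μ (n+1) ^ n :=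
              pow_le_pow_left₀ (hμpos n).le (hμmono (Nat.le_succ n)) n
            have := hμpos (n+1); nlinarith
        _ = μ (n+1) ^ (n+1) := by ring
  -- μ → ∞
  have hμtop : Filter.Tendsto μ Filter.atTop Filter.atTop := by
    apply Filter.tendsto_atTop_mono' Filter.atTop _ hMgrow
    filter_upwards [Filter.eventually_ge_atTop 1] with j hj
    have hj0 : (j:ℝ) ≠ 0 := by positivity
    have h1 : (M j) ^ (1/(j:ℝ)) ≤ (μ j ^ j) ^ (1/(j:ℝ)) :=
      Real.rpow_le_rpow (hMpos j).le (hMμ j) (by positivity)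
    have h2 : ((μ j ^ j : ℝ)) ^ (1/(j:ℝ)) = μ j := by
      rw [← Real.rpow_natCast (μ j) j, ← Real.rpow_mul (hμpos j).le]
      rw [mul_one_div, div_self hj0, Real.rpow_one]
    rw [h2] at h1
    exact h1
  -- finiteness of the counting set
  have hfin : ∀ t : ℝ, ({j : ℕ | 1 ≤ j ∧ μ j ≤ t}).Finite := by
    intro t
    obtain ⟨N, hN⟩ := Filter.eventually_atTop.mp (hμtop.eventually_gt_atTop t)
    apply (Set.finite_Iio N).subset
    intro j hj
    simp only [Set.mem_Iio]
    by_contra h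
    push_neg at h
    exact absurd hj.2 (not_le.mpr (hN j h))
  -- Fact A : if μ m ≤ t then m ≤ Sig t
  have factA : ∀ (t : ℝ) (m : ℕ), 1 ≤ m → μ m ≤ t → m ≤ Sig t := by
    intro t m hm hle
    rw [hSig]
    have hsub : Set.Icc 1 m ⊆ {j : ℕ | 1 ≤ j ∧ μ j ≤ t} := by
      intro j hj
      exact ⟨hj.1, (hμmono hj.2).trans hle⟩
    calc m = (Set.Icc 1 m).ncard := by
            rw [← Finset.coe_Icc, Set.ncard_coe_finset, Nat.card_Icc]; omega
      _ ≤ _ := Set.ncard_le_ncard hsub (hfin t)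
  -- Fact B : if 1 ≤ m ≤ Sig t then μ m ≤ t
  have factB : ∀ (t : ℝ) (m : ℕ), 1 ≤ m → m ≤ Sig t → μ m ≤ t := by
    intro t m hm hle
    by_contra hgt
    push_neg at hgt
    have hsub : {j : ℕ | 1 ≤ j ∧ μ j ≤ t} ⊆ Set.Icc 1 (m-1) := by
      rintro j ⟨hj1, hjt⟩
      refine ⟨hj1, ?_⟩
      by_contra h
      push_neg at h
      have : μ m ≤ μ j := hμmono (by omega)
      linarith
    have hS : Sig t ≤ m - 1 := by
      rw [hSig]
      calc _ ≤ (Set.Icc 1 (m-1)).ncard := Set.ncard_le_ncard hsub (Set.finite_Icc _ _)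
        _ = m - 1 := by
            rw [← Finset.coe_Icc, Set.ncard_coe_finset, Nat.card_Icc]; omega
    omega
  constructor
  · -- forward direction
    rintro ⟨K, hK, t₀, ht₀, hcond⟩
    refine ⟨K, hK, ?_⟩
    obtain ⟨j₀, hj₀⟩ := Filter.eventually_atTop.mp (hμtop.eventually_ge_atTop (Real.exp t₀))
    refine ⟨max j₀ 1, ?_⟩
    intro j hj
    have hj1 : 1 ≤ j := le_trans (le_max_right _ _) hj
    have hjj₀ : j₀ ≤ j := le_trans (le_max_left _ _) hj
    set t := Real.log (μ j) with ht
    have hexp : Real.exp t = μ j := Real.exp_log (hμpos j)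
    have htt₀ : t₀ ≤ t := by
      have h1 := hj₀ j hjj₀
      calc t₀ = Real.log (Real.exp t₀) := (Real.log_exp t₀).symm
        _ ≤ t := Real.log_le_log (Real.exp_pos _) h1
    have h1 : j ≤ Sig (Real.exp t) := factA _ _ hj1 (by rw [hexp])
    have h2 := hcond t htt₀
    have h3 : ((j:ℝ))^2 ≤ (Sig (Real.exp (K*t)) : ℝ) := by
      refine le_trans ?_ h2
      have : (j:ℝ) ≤ (Sig (Real.exp t) : ℝ) := by exact_mod_cast h1
      nlinarith [Nat.cast_nonneg (α := ℝ) j]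
    have h4 : j^2 ≤ Sig (Real.exp (K*t)) := by exact_mod_cast h3
    have h5 : μ (j^2) ≤ Real.exp (K*t) :=
      factB _ _ (Nat.one_le_pow 2 j (by omega)) h4
    calc μ (j^2) ≤ Real.exp (K*t) := h5
      _ = μ j ^ K := by rw [Real.rpow_def_of_pos (hμpos j), mul_comm]
  · -- backward direction
    rintro ⟨A, hA, j₀, hj₀⟩
    refine ⟨max A 1, lt_of_lt_of_le one_pos (le_max_right _ _), ?_⟩
    set j₁ := max j₀ 1 with hj₁
    refine ⟨max 1 (Real.log (μ j₁)), lt_of_lt_of_le one_pos (le_max_left _ _), ?_⟩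
    intro t ht
    have ht1 : (1:ℝ) ≤ t := le_trans (le_max_left _ _) ht
    have htlog : Real.log (μ j₁) ≤ t := le_trans (le_max_right _ _) ht
    have hμj₁ : μ j₁ ≤ Real.exp t := by
      calc μ j₁ = Real.exp (Real.log (μ j₁)) := (Real.exp_log (hμpos _)).symm
        _ ≤ Real.exp t := Real.exp_le_exp.mpr htlog
    set n := Sig (Real.exp t) with hn
    have hn1 : j₁ ≤ n := factA _ _ (le_max_right _ _) hμj₁
    have hnj₀ : j₀ ≤ n := le_trans (le_max_left _ _) hn1
    have hn1' : 1 ≤ n := le_trans (le_max_right _ _) hn1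
    have hμn : μ n ≤ Real.exp t := factB _ _ hn1' le_rfl
    have key : μ (n^2) ≤ Real.exp ((max A 1) * t) := by
      calc μ (n^2) ≤ μ n ^ A := hj₀ n hnj₀
        _ ≤ (Real.exp t) ^ A := Real.rpow_le_rpow (hμpos n).le hμn hA.le
        _ = Real.exp (t * A) := (Real.exp_mul t A).symm
        _ ≤ Real.exp (max A 1 * t) := by
            apply Real.exp_le_exp.mpr
            rw [mul_comm]
            have : A ≤ max A 1 := le_max_left _ _
            nlinarith
    have hfinal : n^2 ≤ Sig (Real.exp (max A 1 * t)) :=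
      factA _ _ (Nat.one_le_pow 2 n (by omega)) key
    exact_mod_cast hfinal
end
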